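/- Suppose u : 2^[n] → ℝ≥0 is a normalized, monotone, submodular and second-order supermodular set function and c : 2^[n] → ℝ≥0 is modular with positive singleton costs c_1,…,c_n. Let L be a permutation of [n] that is locally optimal with respect to insertions and let O be a permutation of [n] of minimum objective value. Then for all i, j ∈ [n]: Σ_{r=j}^n c(L_r)·Σ_{s=1}^n b_{sr} ≤ [c({o_i}) + c(L_{j−1})]·Σ_{r=j}^n b_{ir} + Σ_{r=j}^n [c({o_i}) + c(L_r)]·Σ_{s=1, s≠i}^n b_{sr}. -/

import Mathlib

open Finset

/-- The set of the first `k` elements of the list `L`. -/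
def prefSet {n : ℕ} (L : List (Fin n)) (k : ℕ) : Finset (Fin n) := (L.take k).toFinset

/-- Marginal value `f(e|S) = f(S ∪ {e}) - f S`. -/
noncomputable def marg {n : ℕ} (f : Finset (Fin n) → ℝ) (e : Fin n) (S : Finset (Fin n)) : ℝ :=
  f (insert e S) - f S

/-- `L` is a listing of all elements of `[n]` (a permutation of `[n]`). -/
def IsPermList {n : ℕ} (L : List (Fin n)) : Prop := L.Nodup ∧ ∀ x : Fin n, x ∈ L

/-- The objective value `∑_{i=1}^n c(S_i)(u(S_i) - u(S_{i-1}))`. -/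
noncomputable def objective {n : ℕ} (u c : Finset (Fin n) → ℝ) (L : List (Fin n)) : ℝ :=
  ∑ i ∈ Finset.range L.length,
    c (prefSet L (i + 1)) * (u (prefSet L (i + 1)) - u (prefSet L i))

/-- The element in (1-indexed) position `k` of the list `L`. -/
def elemAt {n : ℕ} [NeZero n] (L : List (Fin n)) (k : ℕ) : Fin n := L.getD (k - 1) default

/-- The quantity `b_{ij} = u(o_i | O_{i-1} ∪ L_{j-1}) - u(o_i | O_{i-1} ∪ L_{j-1} ∪ {l_j})`. -/
noncomputable def bmat {n : ℕ} [NeZero n] (u : Finset (Fin n) → ℝ) (L O : List (Fin n))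
    (i j : ℕ) : ℝ :=
  marg u (elemAt O i) (prefSet O (i - 1) ∪ prefSet L (j - 1)) -
    marg u (elemAt O i) (insert (elemAt L j) (prefSet O (i - 1) ∪ prefSet L (j - 1)))

/-- Monotone set function. -/
def Mono {n : ℕ} (f : Finset (Fin n) → ℝ) : Prop :=
  ∀ S : Finset (Fin n), ∀ i : Fin n, f S ≤ f (insert i S)

/-- Submodular set function. -/
def Submod {n : ℕ} (f : Finset (Fin n) → ℝ) : Prop :=
  ∀ S : Finset (Fin n), ∀ i j : Fin n, i ∉ S → j ∉ S →
    marg f i (insert j S) ≤ marg f i S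

/-- Second-order supermodular set function. -/
def SOSupermod {n : ℕ} (f : Finset (Fin n) → ℝ) : Prop :=
  ∀ S : Finset (Fin n), ∀ i j k : Fin n, i ∉ S → j ∉ S → k ∉ S →
    marg f i (insert k S) - marg f i (insert j (insert k S)) ≤
      marg f i S - marg f i (insert j S)

/-- Objective value of a length-(n+1) pseudo-neighbor sequence, where costs are
counted with multiplicity via the singleton costs `cs`. -/
noncomputable def pseudoObj {n : ℕ} (u : Finset (Fin n) → ℝ) (cs : Fin n → ℝ)
    (P : List (Fin n)) : ℝ :=
  ∑ k ∈ Finset.range P.length,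
    (((P.take (k + 1)).map cs).sum) * (u (prefSet P (k + 1)) - u (prefSet P k))

/-- The pseudo-neighbor of `L` obtained by inserting a second copy of the element in
(1-indexed) position `i` at (1-indexed) position `j`. -/
def pseudoNeighbor {n : ℕ} [NeZero n] (L : List (Fin n)) (i j : ℕ) : List (Fin n) :=
  L.insertIdx (j - 1) (elemAt L i)

/-- `L` is locally optimal with respect to insertions: no pseudo-neighbor has strictly
smaller objective value. -/
def LocallyOptimalInsertions {n : ℕ} [NeZero n] (u c : Finset (Fin n) → ℝ) (cs : Fin n → ℝ)
    (L : List (Fin n)) : Prop :=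
  ∀ i j : ℕ, 1 ≤ j → j < i → i ≤ n →
    objective u c L ≤ pseudoObj u cs (pseudoNeighbor L i j)

/-- The list obtained from `L` by removing the element in (1-indexed) position `i` and
reinserting it at (1-indexed) position `j`. -/
def moveList {n : ℕ} [NeZero n] (L : List (Fin n)) (i j : ℕ) : List (Fin n) :=
  (L.eraseIdx (i - 1)).insertIdx (j - 1) (elemAt L i)

/-- `L'` is a move-neighbor of `L`. -/
def IsMoveNeighbor {n : ℕ} [NeZero n] (L L' : List (Fin n)) : Prop :=
  ∃ i j : ℕ, 1 ≤ i ∧ i ≤ n ∧ 1 ≤ j ∧ j ≤ n ∧ i ≠ j ∧ L' = moveList L i j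

/-!
Write `o = o_i` and `Δ_r = u(o | L_{r-1}) - u(o | L_r)`. Second-order supermodularity, pushed
from `L_{r-1}` up to `O_{i-1} ∪ L_{r-1}` one element at a time (submodularity covers the
degenerate cases), gives `b_{ir} ≤ Δ_r`, and the column sums of `b` telescope:
`∑_{r ≥ j} ∑_s b_{sr} = u([n]) - u(L_{j-1})`. After this the claim reduces to
`∑_{r ≥ j} (c(L_r) - c(L_{j-1})) Δ_r ≤ c_o (u([n]) - u(L_{j-1}))`. If `o` stands in `L` after
position `j`, this is the local optimality of `L` against the pseudo-neighbor with a second copy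
of `o` at position `j`, once both objective values are telescoped. Otherwise `Δ_r = 0` for
`r > j`, and the single remaining term is bounded by monotonicity.
-/

section SetFunction

variable {n : ℕ} {f : Finset (Fin n) → ℝ}

theorem marg_eq_zero_of_mem (f : Finset (Fin n) → ℝ) {e : Fin n} {S : Finset (Fin n)}
    (h : e ∈ S) : marg f e S = 0 := by
  simp [marg, insert_eq_self.2 h]

theorem union_le_of_insert_le {g : Finset (Fin n) → ℝ} {Z : Finset (Fin n)}
    (hg : ∀ S k, Disjoint S Z → k ∉ S → g (insert k S) ≤ g S)
    (A X : Finset (Fin n)) (hZ : Disjoint (A ∪ X) Z) : g (A ∪ X) ≤ g A := by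
  induction X using Finset.induction_on with
  | empty => simp
  | @insert k X _ ih =>
    rw [union_insert] at hZ ⊢
    have hXZ : Disjoint (A ∪ X) Z := disjoint_of_subset_left (subset_insert _ _) hZ
    by_cases hk : k ∈ A ∪ X
    · rw [insert_eq_self.2 hk]; exact ih hXZ
    · exact (hg _ k hXZ hk).trans (ih hXZ)

theorem Mono.le_of_subset (hf : Mono f) {S T : Finset (Fin n)} (h : S ⊆ T) : f S ≤ f T := by
  rw [← union_sdiff_of_subset h, ← neg_le_neg_iff]
  exact union_le_of_insert_le (g := fun S => -f S) (Z := ∅)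
    (fun S k _ _ => neg_le_neg (hf S k)) S (T \ S) (disjoint_empty_right _)

theorem Submod.marg_union_le (hf : Submod f) {e : Fin n} (A X : Finset (Fin n))
    (he : e ∉ A ∪ X) : marg f e (A ∪ X) ≤ marg f e A :=
  union_le_of_insert_le (Z := {e})
    (fun S k hS hk => hf S e k (disjoint_singleton_right.1 hS) hk) A X
    (disjoint_singleton_right.2 he)

noncomputable def margDrop (f : Finset (Fin n) → ℝ) (e l : Fin n) (S : Finset (Fin n)) : ℝ :=
  marg f e S - marg f e (insert l S)

theorem SOSupermod.margDrop_union_le (hf : SOSupermod f) {e l : Fin n} (A X : Finset (Fin n))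
    (he : e ∉ A ∪ X) (hl : l ∉ A ∪ X) : margDrop f e l (A ∪ X) ≤ margDrop f e l A :=
  union_le_of_insert_le (Z := {e, l})
    (fun S k hS hk => by
      rw [disjoint_insert_right, disjoint_singleton_right] at hS
      exact hf S e l k hS.1 hS.2 hk) A X
    (by rw [disjoint_insert_right, disjoint_singleton_right]; exact ⟨he, hl⟩)

theorem margDrop_union_le (hsub : Submod f) (hsos : SOSupermod f) (e : Fin n)
    {l : Fin n} {A : Finset (Fin n)} (hl : l ∉ A) (X : Finset (Fin n)) :
    margDrop f e l (A ∪ X) ≤ margDrop f e l A := by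
  by_cases heA : e ∈ A
  · simp [margDrop, marg_eq_zero_of_mem f, heA]
  have hA : 0 ≤ margDrop f e l A := sub_nonneg.2 (hsub A e l heA hl)
  by_cases heX : e ∈ A ∪ X
  · simpa [margDrop, marg_eq_zero_of_mem f, heX] using hA
  by_cases hlX : l ∈ A ∪ X
  · simpa [margDrop, insert_eq_self.2 hlX] using hA
  by_cases hel : e = l
  · subst hel
    simpa [margDrop, marg_eq_zero_of_mem f] using hsub.marg_union_le A X heX
  exact hsos.margDrop_union_le A X heX hlX

end SetFunction

section Prefix

variable {n : ℕ}

theorem prefSet_zero (L : List (Fin n)) : prefSet L 0 = ∅ := by simp [prefSet]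

theorem prefSet_mono (L : List (Fin n)) {a b : ℕ} (h : a ≤ b) :
    prefSet L a ⊆ prefSet L b := by
  intro x hx
  simp only [prefSet, List.mem_toFinset] at hx ⊢
  exact List.take_subset_take_left L h hx

theorem IsPermList.toFinset_eq_univ {L : List (Fin n)} (hL : IsPermList L) :
    L.toFinset = univ := by
  ext x; simp [hL.2 x]

theorem IsPermList.length_eq {L : List (Fin n)} (hL : IsPermList L) : L.length = n := by
  simpa [hL.toFinset_eq_univ] using (List.toFinset_card_of_nodup hL.1).symm

theorem IsPermList.prefSet_eq_univ {L : List (Fin n)} (hL : IsPermList L) :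
    prefSet L n = univ := by
  rw [prefSet, List.take_of_length_le hL.length_eq.le, hL.toFinset_eq_univ]

theorem sum_map_take_eq_sum_prefSet {L : List (Fin n)} (hL : L.Nodup) (w : Fin n → ℝ)
    (k : ℕ) : ((L.take k).map w).sum = ∑ x ∈ prefSet L k, w x := by
  rw [prefSet, List.sum_toFinset _ (hL.sublist (List.take_sublist k L))]

theorem List.take_insertIdx_of_lt {α : Type*} (l : List α) (x : α) {i k : ℕ} (h : i < k) :
    (l.insertIdx i x).take k = (l.take (k - 1)).insertIdx i x :=
  List.ext_getElem (by grind) (by grind)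

theorem List.take_insertIdx_perm {α : Type*} (l : List α) (x : α) {i k : ℕ}
    (hil : i ≤ l.length) (hik : i < k) :
    ((l.insertIdx i x).take k).Perm (x :: l.take (k - 1)) := by
  rw [List.take_insertIdx_of_lt _ _ hik]
  exact List.perm_insertIdx _ _ (by simp only [List.length_take]; omega)

variable [NeZero n]

theorem prefSet_eq_insert_elemAt (L : List (Fin n)) {r : ℕ} (h1 : 1 ≤ r) (h2 : r ≤ L.length) :
    prefSet L r = insert (elemAt L r) (prefSet L (r - 1)) := by
  obtain ⟨k, rfl⟩ : ∃ k, r = k + 1 := ⟨r - 1, by omega⟩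
  simp only [prefSet, elemAt, Nat.add_sub_cancel,
    List.getD_eq_getElem _ _ (by omega : k < L.length), List.take_add_one,
    List.getElem?_eq_getElem (by omega : k < L.length), List.toFinset_append]
  ext x; simp [or_comm]

theorem elemAt_notMem_prefSet {L : List (Fin n)} (hL : L.Nodup) {r : ℕ} (h1 : 1 ≤ r)
    (h2 : r ≤ L.length) : elemAt L r ∉ prefSet L (r - 1) := by
  obtain ⟨k, rfl⟩ : ∃ k, r = k + 1 := ⟨r - 1, by omega⟩
  simp only [prefSet, elemAt, Nat.add_sub_cancel, List.mem_toFinset,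
    List.getD_eq_getElem _ _ (by omega : k < L.length)]
  intro hmem
  obtain ⟨t, ht, hteq⟩ := List.mem_iff_getElem.1 hmem
  simp only [List.getElem_take, List.length_take] at ht hteq
  have := hL.getElem_inj_iff.1 hteq
  omega

end Prefix

section IntervalSums

variable {M : Type*} [AddCommGroup M]

theorem sum_range_succ_eq_sum_Icc_one (g : ℕ → M) (N : ℕ) :
    ∑ k ∈ range N, g (k + 1) = ∑ r ∈ Icc 1 N, g r := by
  induction N with
  | zero => simp
  | succ N ih => rw [sum_range_succ, ih, sum_Icc_succ_top (by omega)]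

theorem sum_Icc_eq_add_sum_Icc_add_one {a b : ℕ} (h : a ≤ b + 1) (g : ℕ → M) :
    ∑ r ∈ Icc a (b + 1), g r = g a + ∑ r ∈ Icc a b, g (r + 1) := by
  rw [← sum_Ioc_add_eq_sum_Icc h, ← Icc_add_one_left_eq_Ioc, ← map_add_right_Icc, sum_map,
    add_comm]
  rfl

theorem sum_Icc_one_eq_add_sum_Icc {j N : ℕ} (hj : 1 ≤ j) (hjN : j ≤ N + 1) (g : ℕ → M) :
    ∑ r ∈ Icc 1 N, g r = ∑ r ∈ Icc 1 (j - 1), g r + ∑ r ∈ Icc j N, g r := by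
  obtain ⟨k, rfl⟩ : ∃ k, j = k + 1 := ⟨j - 1, by omega⟩
  have hIcc_one (m : ℕ) : Icc 1 m = Ioc 0 m := Icc_add_one_left_eq_Ioc 0 m
  rw [Nat.add_sub_cancel, hIcc_one, hIcc_one, Icc_add_one_left_eq_Ioc,
    sum_Ioc_consecutive _ (by omega) (by omega)]

theorem sum_Icc_sub_pred {j N : ℕ} (hj : 1 ≤ j) (hjN : j ≤ N + 1) (g : ℕ → M) :
    ∑ r ∈ Icc j N, (g r - g (r - 1)) = g N - g (j - 1) := by
  obtain ⟨k, rfl⟩ : ∃ k, j = k + 1 := ⟨j - 1, by omega⟩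
  rw [Icc_add_one_left_eq_Ioc, Nat.add_sub_cancel]
  induction N, (by omega : k ≤ N) using Nat.le_induction with
  | base => simp
  | succ N hkN ih =>
    rw [sum_Ioc_succ_top hkN, ih (by omega), Nat.add_sub_cancel]
    abel

end IntervalSums

section Objective

variable {n : ℕ} (u : Finset (Fin n) → ℝ) (cs : Fin n → ℝ)

theorem pseudoObj_eq_sum_Icc (P : List (Fin n)) :
    pseudoObj u cs P = ∑ r ∈ Icc 1 P.length,
      ((P.take r).map cs).sum * (u (prefSet P r) - u (prefSet P (r - 1))) := by
  rw [pseudoObj, ← sum_range_succ_eq_sum_Icc_one]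
  simp only [Nat.add_sub_cancel]

theorem objective_eq_pseudoObj {c : Finset (Fin n) → ℝ} (hc : ∀ S, c S = ∑ i ∈ S, cs i)
    {L : List (Fin n)} (hL : L.Nodup) : objective u c L = pseudoObj u cs L := by
  simp only [objective, pseudoObj, hc, sum_map_take_eq_sum_prefSet hL]

variable {u cs}

theorem pseudoObj_insertIdx (L : List (Fin n)) (o : Fin n) {j : ℕ} (hj : 1 ≤ j)
    (hjL : j ≤ L.length) :
    pseudoObj u cs (L.insertIdx (j - 1) o) =
      ∑ r ∈ Icc 1 (j - 1), ((L.take r).map cs).sum * (u (prefSet L r) - u (prefSet L (r - 1))) +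
      (cs o + ((L.take (j - 1)).map cs).sum) * marg u o (prefSet L (j - 1)) +
      ∑ r ∈ Icc j L.length, (cs o + ((L.take r).map cs).sum) *
        (u (insert o (prefSet L r)) - u (insert o (prefSet L (r - 1)))) := by
  set P := L.insertIdx (j - 1) o
  have hfront {k : ℕ} (hk : k ≤ j - 1) : P.take k = L.take k :=
    List.take_insertIdx_eq_take_of_le L o k (j - 1) hk
  have hback {k : ℕ} (hk : j ≤ k) : (P.take k).Perm (o :: L.take (k - 1)) :=
    L.take_insertIdx_perm o (by omega) (by omega)
  have hpre_front {k : ℕ} (hk : k ≤ j - 1) : prefSet P k = prefSet L k := by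
    rw [prefSet, hfront hk, prefSet]
  have hpre_back {k : ℕ} (hk : j ≤ k) : prefSet P k = insert o (prefSet L (k - 1)) := by
    rw [prefSet, List.toFinset_eq_of_perm _ _ (hback hk), List.toFinset_cons, prefSet]
  have hcost_back {k : ℕ} (hk : j ≤ k) :
      ((P.take k).map cs).sum = cs o + ((L.take (k - 1)).map cs).sum := by
    rw [((hback hk).map cs).sum_eq, List.map_cons, List.sum_cons]
  have hPlen : P.length = L.length + 1 := List.length_insertIdx_of_le_length (by omega) o
  rw [pseudoObj_eq_sum_Icc, hPlen,
    sum_Icc_one_eq_add_sum_Icc hj (by omega : j ≤ L.length + 1 + 1),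
    sum_Icc_eq_add_sum_Icc_add_one (by omega), add_assoc]
  congr 1
  · refine sum_congr rfl fun r hr => ?_
    rw [mem_Icc] at hr
    rw [hfront hr.2, hpre_front hr.2, hpre_front (by omega)]
  congr 1
  · rw [hcost_back le_rfl, hpre_back le_rfl, hpre_front le_rfl, marg]
  · refine sum_congr rfl fun r hr => ?_
    rw [mem_Icc] at hr
    rw [hcost_back (by omega), hpre_back (by omega), Nat.add_sub_cancel, hpre_back hr.1]

end Objective

section InsertionBound

variable {n : ℕ} [NeZero n] {u c : Finset (Fin n) → ℝ} {cs : Fin n → ℝ} {L : List (Fin n)}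

theorem LocallyOptimalInsertions.objective_tail_le (hLopt : LocallyOptimalInsertions u c cs L)
    (hc : ∀ S, c S = ∑ i ∈ S, cs i) (hL : IsPermList L) {o : Fin n} {p j : ℕ}
    (hp : elemAt L p = o) (hpn : p ≤ n) (hj : 1 ≤ j) (hjp : j < p) :
    ∑ r ∈ Icc j n, c (prefSet L r) * (u (prefSet L r) - u (prefSet L (r - 1))) ≤
      (cs o + c (prefSet L (j - 1))) * marg u o (prefSet L (j - 1)) +
      ∑ r ∈ Icc j n, (cs o + c (prefSet L r)) *
        (u (insert o (prefSet L r)) - u (insert o (prefSet L (r - 1)))) := by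
  have hopt := hLopt p j hj hjp hpn
  have hlen := hL.length_eq
  rw [objective_eq_pseudoObj u cs hc hL.1, pseudoObj_eq_sum_Icc, pseudoNeighbor, hp,
    pseudoObj_insertIdx L o hj (by omega), sum_Icc_one_eq_add_sum_Icc hj (by omega)] at hopt
  simp only [sum_map_take_eq_sum_prefSet hL.1, ← hc, hlen] at hopt
  linarith

theorem sum_mul_marg_sub_le_of_le (hu : Mono u) (hcs : ∀ i, 0 ≤ cs i)
    (hc : ∀ S, c S = ∑ i ∈ S, cs i) (hL : IsPermList L) {o : Fin n} {p j : ℕ}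
    (hp : elemAt L p = o) (hp1 : 1 ≤ p) (hpj : p ≤ j) (hjn : j ≤ n) :
    ∑ r ∈ Icc j n, (c (prefSet L r) - c (prefSet L (j - 1))) *
        (marg u o (prefSet L (r - 1)) - marg u o (prefSet L r)) ≤
      cs o * (u univ - u (prefSet L (j - 1))) := by
  have hlen := hL.length_eq
  have hLp : prefSet L p = insert o (prefSet L (p - 1)) := by
    rw [prefSet_eq_insert_elemAt L hp1 (by omega), hp]
  have hzero {r : ℕ} (hr : p ≤ r) : marg u o (prefSet L r) = 0 :=
    marg_eq_zero_of_mem u (prefSet_mono L hr (hLp ▸ mem_insert_self o _))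
  rw [sum_eq_single_of_mem j (mem_Icc.2 ⟨le_rfl, hjn⟩) fun r hr hrj => by
      rw [mem_Icc] at hr
      rw [hzero (by omega), hzero (by omega), sub_self, mul_zero],
    hzero hpj, sub_zero]
  have hu_le : u (prefSet L (j - 1)) ≤ u univ := hu.le_of_subset (subset_univ _)
  rcases hpj.lt_or_eq with hpj | rfl
  · rw [hzero (by omega), mul_zero]
    exact mul_nonneg (hcs o) (sub_nonneg.2 hu_le)
  · have ho : o ∉ prefSet L (p - 1) := hp ▸ elemAt_notMem_prefSet hL.1 hp1 (by omega)
    rw [hLp, hc, hc, sum_insert ho, add_sub_cancel_right, marg]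
    exact mul_le_mul_of_nonneg_left
      (sub_le_sub_right (hu.le_of_subset (subset_univ _)) _) (hcs o)

theorem LocallyOptimalInsertions.sum_mul_marg_sub_le_of_lt
    (hLopt : LocallyOptimalInsertions u c cs L) (hc : ∀ S, c S = ∑ i ∈ S, cs i)
    (hL : IsPermList L) {o : Fin n} {p j : ℕ} (hp : elemAt L p = o) (hpn : p ≤ n) (hj : 1 ≤ j)
    (hjp : j < p) :
    ∑ r ∈ Icc j n, (c (prefSet L r) - c (prefSet L (j - 1))) *
        (marg u o (prefSet L (r - 1)) - marg u o (prefSet L r)) ≤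
      cs o * (u univ - u (prefSet L (j - 1))) := by
  have hopt := hLopt.objective_tail_le hc hL hp hpn hj hjp
  obtain ⟨m, hm⟩ : ∃ m : ℕ → ℝ, ∀ r, marg u o (prefSet L r) = m r :=
    ⟨_, fun _ => rfl⟩
  have hu_tele := sum_Icc_sub_pred hj (by omega : j ≤ n + 1) fun r => u (prefSet L r)
  have hm_tele := sum_Icc_sub_pred hj (by omega : j ≤ n + 1) m
  have hm_n : m n = 0 := hm n ▸ marg_eq_zero_of_mem u (by simp [hL.prefSet_eq_univ])
  rw [hL.prefSet_eq_univ] at hu_tele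
  have hsplit (r : ℕ) : (cs o + c (prefSet L r)) *
      (u (insert o (prefSet L r)) - u (insert o (prefSet L (r - 1)))) =
      cs o * (u (prefSet L r) - u (prefSet L (r - 1))) +
        c (prefSet L r) * (u (prefSet L r) - u (prefSet L (r - 1))) +
        cs o * (m r - m (r - 1)) + c (prefSet L r) * (m r - m (r - 1)) := by
    simp only [← hm, marg]; ring
  have hgoal (r : ℕ) : (c (prefSet L r) - c (prefSet L (j - 1))) * (m (r - 1) - m r) =
      c (prefSet L (j - 1)) * (m r - m (r - 1)) - c (prefSet L r) * (m r - m (r - 1)) := by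
    ring
  simp only [hsplit, sum_add_distrib, ← mul_sum, hm, hu_tele, hm_tele, hm_n] at hopt
  simp only [hm]
  rw [sum_congr rfl fun r _ => hgoal r, sum_sub_distrib, ← mul_sum, hm_tele, hm_n]
  linarith

theorem LocallyOptimalInsertions.sum_mul_marg_sub_le
    (hLopt : LocallyOptimalInsertions u c cs L) (hu : Mono u) (hcs : ∀ i, 0 ≤ cs i)
    (hc : ∀ S, c S = ∑ i ∈ S, cs i) (hL : IsPermList L) (o : Fin n) {j : ℕ} (hj : 1 ≤ j)
    (hjn : j ≤ n) :
    ∑ r ∈ Icc j n, (c (prefSet L r) - c (prefSet L (j - 1))) *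
        (marg u o (prefSet L (r - 1)) - marg u o (prefSet L r)) ≤
      cs o * (u univ - u (prefSet L (j - 1))) := by
  obtain ⟨k, hk, rfl⟩ := List.mem_iff_getElem.1 (hL.2 o)
  have hp : elemAt L (k + 1) = L[k] := by
    rw [elemAt, Nat.add_sub_cancel, List.getD_eq_getElem]
  have hlen := hL.length_eq
  rcases le_or_gt (k + 1) j with hkj | hjk
  · exact sum_mul_marg_sub_le_of_le hu hcs hc hL hp (by omega) hkj hjn
  · exact hLopt.sum_mul_marg_sub_le_of_lt hc hL hp (by omega) hj hjk

end InsertionBound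

section Bmat

variable {n : ℕ} [NeZero n] {u : Finset (Fin n) → ℝ} {L O : List (Fin n)}

theorem bmat_eq_marg_sub (hL : IsPermList L) (s : ℕ) {r : ℕ} (hr1 : 1 ≤ r) (hrn : r ≤ n) :
    bmat u L O s r = marg u (elemAt O s) (prefSet O (s - 1) ∪ prefSet L (r - 1)) -
      marg u (elemAt O s) (prefSet O (s - 1) ∪ prefSet L r) := by
  rw [bmat, prefSet_eq_insert_elemAt L hr1 (by rw [hL.length_eq]; exact hrn), union_insert]

theorem sum_bmat_row (hL : IsPermList L) (s : ℕ) {j : ℕ} (hj : 1 ≤ j) (hjn : j ≤ n) :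
    ∑ r ∈ Icc j n, bmat u L O s r =
      marg u (elemAt O s) (prefSet O (s - 1) ∪ prefSet L (j - 1)) := by
  have hrow := sum_Icc_sub_pred hj (by omega : j ≤ n + 1)
    fun r => - marg u (elemAt O s) (prefSet O (s - 1) ∪ prefSet L r)
  rw [hL.prefSet_eq_univ, union_eq_right.2 (subset_univ _),
    marg_eq_zero_of_mem u (mem_univ _)] at hrow
  simp only [neg_sub_neg, neg_zero, zero_sub, neg_neg] at hrow
  rw [← hrow]
  exact sum_congr rfl fun r hr => bmat_eq_marg_sub hL s (hj.trans (mem_Icc.1 hr).1)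
    (mem_Icc.1 hr).2

theorem sum_sum_bmat (hL : IsPermList L) (hO : IsPermList O) {j : ℕ} (hj : 1 ≤ j)
    (hjn : j ≤ n) :
    ∑ r ∈ Icc j n, ∑ s ∈ Icc 1 n, bmat u L O s r = u univ - u (prefSet L (j - 1)) := by
  have hcol := sum_Icc_sub_pred le_rfl (by omega : 1 ≤ n + 1)
    fun s => u (prefSet O s ∪ prefSet L (j - 1))
  rw [hO.prefSet_eq_univ, union_eq_left.2 (subset_univ _), Nat.sub_self, prefSet_zero,
    empty_union] at hcol
  rw [sum_comm, ← hcol]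
  refine sum_congr rfl fun s hs => ?_
  rw [sum_bmat_row hL s hj hjn, marg, ← insert_union,
    ← prefSet_eq_insert_elemAt O (mem_Icc.1 hs).1
      (by rw [hO.length_eq]; exact (mem_Icc.1 hs).2)]

theorem bmat_le_marg_sub (hsub : Submod u) (hsos : SOSupermod u) (hL : IsPermList L)
    (s : ℕ) {r : ℕ} (hr1 : 1 ≤ r) (hrn : r ≤ n) :
    bmat u L O s r ≤
      marg u (elemAt O s) (prefSet L (r - 1)) - marg u (elemAt O s) (prefSet L r) := by
  have hrL : r ≤ L.length := by rw [hL.length_eq]; exact hrn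
  have := margDrop_union_le hsub hsos (elemAt O s) (elemAt_notMem_prefSet hL.1 hr1 hrL)
    (prefSet O (s - 1))
  rw [union_comm] at this
  unfold margDrop at this
  rwa [← prefSet_eq_insert_elemAt L hr1 hrL] at this

end Bmat

theorem LocallyOptimalInsertions.sum_mul_bmat_le {n : ℕ} [NeZero n] {u c : Finset (Fin n) → ℝ}
    {cs : Fin n → ℝ} {L O : List (Fin n)} (hLopt : LocallyOptimalInsertions u c cs L)
    (hu_mono : Mono u) (hu_sub : Submod u) (hu_sos : SOSupermod u) (hcs : ∀ i, 0 ≤ cs i)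
    (hc : ∀ S, c S = ∑ i ∈ S, cs i) (hL : IsPermList L) (i : ℕ) {j : ℕ} (hj1 : 1 ≤ j)
    (hjn : j ≤ n) :
    ∑ r ∈ Icc j n, (c (prefSet L r) - c (prefSet L (j - 1))) * bmat u L O i r ≤
      cs (elemAt O i) * (u univ - u (prefSet L (j - 1))) := by
  refine (sum_le_sum fun r hr => ?_).trans
    (hLopt.sum_mul_marg_sub_le hu_mono hcs hc hL (elemAt O i) hj1 hjn)
  obtain ⟨hjr, hrn⟩ := mem_Icc.1 hr
  have hcost : c (prefSet L (j - 1)) ≤ c (prefSet L r) := by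
    rw [hc, hc]
    exact sum_le_sum_of_subset_of_nonneg (prefSet_mono L (by omega)) fun x _ _ => hcs x
  exact mul_le_mul_of_nonneg_left (bmat_le_marg_sub hu_sub hu_sos hL i (by omega) hrn)
    (sub_nonneg.2 hcost)

theorem local_opt_constraint_general (n : ℕ) [NeZero n] (u c : Finset (Fin n) → ℝ) (cs : Fin n → ℝ)
    (hu_mono : Mono u)
    (hu_sub : Submod u) (hu_sos : SOSupermod u)
    (hcs_pos : ∀ i, 0 < cs i) (hc : ∀ S, c S = ∑ i ∈ S, cs i)
    (L O : List (Fin n)) (hL : IsPermList L) (hO : IsPermList O)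
    (hLopt : LocallyOptimalInsertions u c cs L)
    (i j : ℕ) (hi1 : 1 ≤ i) (hin : i ≤ n) (hj1 : 1 ≤ j) (hjn : j ≤ n) :
    ∑ r ∈ Finset.Icc j n, c (prefSet L r) * ∑ s ∈ Finset.Icc 1 n, bmat u L O s r ≤
      (c {elemAt O i} + c (prefSet L (j - 1))) * ∑ r ∈ Finset.Icc j n, bmat u L O i r +
        ∑ r ∈ Finset.Icc j n, (c {elemAt O i} + c (prefSet L r)) *
          ∑ s ∈ (Finset.Icc 1 n).erase i, bmat u L O s r := by
  have hrow := hLopt.sum_mul_bmat_le (O := O) hu_mono hu_sub hu_sos (fun x => (hcs_pos x).le)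
    hc hL i hj1 hjn
  have hcol := sum_sum_bmat (u := u) hL hO hj1 hjn
  rw [hc {elemAt O i}, sum_singleton]
  simp only [sum_erase_eq_sub (mem_Icc.2 ⟨hi1, hin⟩)]
  simp only [mul_sub, sub_mul, add_mul, sum_add_distrib, sum_sub_distrib, ← mul_sum]
    at hrow ⊢
  rw [hcol]
  linarith

theorem local_opt_constraint (n : ℕ) [NeZero n] (u c : Finset (Fin n) → ℝ) (cs : Fin n → ℝ)
    (hu0 : u ∅ = 0) (hu_nonneg : ∀ S, 0 ≤ u S) (hu_mono : Mono u)
    (hu_sub : Submod u) (hu_sos : SOSupermod u)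
    (hcs_pos : ∀ i, 0 < cs i) (hc : ∀ S, c S = ∑ i ∈ S, cs i)
    (L O : List (Fin n)) (hL : IsPermList L) (hO : IsPermList O)
    (hLopt : LocallyOptimalInsertions u c cs L)
    (hOopt : ∀ O', IsPermList O' → objective u c O ≤ objective u c O')
    (i j : ℕ) (hi1 : 1 ≤ i) (hin : i ≤ n) (hj1 : 1 ≤ j) (hjn : j ≤ n) :
    ∑ r ∈ Finset.Icc j n, c (prefSet L r) * ∑ s ∈ Finset.Icc 1 n, bmat u L O s r ≤
      (c {elemAt O i} + c (prefSet L (j - 1))) * ∑ r ∈ Finset.Icc j n, bmat u L O i r +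
        ∑ r ∈ Finset.Icc j n, (c {elemAt O i} + c (prefSet L r)) *
          ∑ s ∈ (Finset.Icc 1 n).erase i, bmat u L O s r :=
  local_opt_constraint_general n u c cs hu_mono hu_sub hu_sos hcs_pos hc L O hL hO hLopt i j hi1 hin
    hj1 hjn
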